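/- Deficient vertices on opposite sides are adjacent: In the setting where G is a finite simple graph with no (a,b)-feasible pair, a, b : V(G) → ℤ≥0, h : V(G) → {0,1}, d_G(u) = a(u) + b(u) + h(u) and min{a(u), b(u)} ≥ 1 for all u, let (X_1, X_2) be a degenerate partition of V(G) maximizing the weight ω(X_1,X_2) and, subject to that, minimizing |X_1|. Then every vertex u_1 ∈ X_1 with d_{X_1}(u_1) ≤ a(u_1) is adjacent to every vertex u_2 ∈ X_2 with d_{X_2}(u_2) ≤ b(u_2) + h(u_2) − 1. -/
import Mathlib


open scoped Classical

/-- `(A, B)` forms an `(a,b)`-feasible pair in `G`. -/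
def FeasiblePair {V : Type*} [DecidableEq V] (G : SimpleGraph V) [DecidableRel G.Adj]
    (a b : V → ℕ) : Prop :=
  ∃ A B : Finset V, A.Nonempty ∧ B.Nonempty ∧ Disjoint A B ∧
    (∀ u ∈ A, a u ≤ (A.filter (G.Adj u)).card) ∧
    (∀ v ∈ B, b v ≤ (B.filter (G.Adj v)).card)

/-- Number of edges of `G` with both endpoints in `X`. -/
noncomputable def edgesIn {V : Type*} [Fintype V] [DecidableEq V]
    (G : SimpleGraph V) [DecidableRel G.Adj] (X : Finset V) : ℕ :=
  (G.edgeFinset.filter (fun e => ∀ v ∈ e, v ∈ X)).card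

/-- The weight `ω(X₁, X₂) = e(X₁) + e(X₂) + Σ_{u ∈ X₁} b(u) + Σ_{v ∈ X₂} a(v)`. -/
noncomputable def wt {V : Type*} [Fintype V] [DecidableEq V]
    (G : SimpleGraph V) [DecidableRel G.Adj] (a b : V → ℕ) (X1 X2 : Finset V) : ℕ :=
  edgesIn G X1 + edgesIn G X2 + ∑ u ∈ X1, b u + ∑ v ∈ X2, a v

/-- A degenerate partition: both parts are non-empty, they partition `V(G)`,
`X₁` is 1-meager and `X₂` is 2-meager. -/
def DegenPartition {V : Type*} [Fintype V] [DecidableEq V]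
    (G : SimpleGraph V) [DecidableRel G.Adj] (a b h : V → ℕ) (X1 X2 : Finset V) : Prop :=
  X1.Nonempty ∧ X2.Nonempty ∧ Disjoint X1 X2 ∧ X1 ∪ X2 = Finset.univ ∧
    (∀ X' ⊆ X1, X'.Nonempty → ∃ x ∈ X', (X'.filter (G.Adj x)).card ≤ a x) ∧
    (∀ X' ⊆ X2, X'.Nonempty → ∃ x ∈ X', (X'.filter (G.Adj x)).card + 1 ≤ b x + h x)

open Finset in
lemma edgesIn_insert' {V : Type*} [Fintype V] [DecidableEq V]
    (G : SimpleGraph V) [DecidableRel G.Adj] (v : V) (X : Finset V) (hv : v ∉ X) :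
    edgesIn G (insert v X) = edgesIn G X + (X.filter (G.Adj v)).card := by
  classical
  unfold edgesIn
  have hset : G.edgeFinset.filter (fun e => ∀ w ∈ e, w ∈ insert v X)
      = (G.edgeFinset.filter (fun e => ∀ w ∈ e, w ∈ X))
        ∪ ((X.filter (G.Adj v)).image (fun y => s(v, y))) := by
    ext e
    induction e using Sym2.inductionOn with
    | hf x y =>
      simp only [mem_filter, mem_union, mem_image, SimpleGraph.mem_edgeFinset,
        SimpleGraph.mem_edgeSet, Sym2.mem_iff, mem_insert]
      constructor
      · rintro ⟨hxy, hmem⟩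
        have hx := hmem x (Or.inl rfl)
        have hy := hmem y (Or.inr rfl)
        rcases hx with hx | hx
        · subst hx
          have hyX : y ∈ X := by
            rcases hy with hy | hy
            · exact absurd (hy ▸ hxy) (G.irrefl)
            · exact hy
          exact Or.inr ⟨y, ⟨hyX, hxy⟩, rfl⟩
        · rcases hy with hy | hy
          · subst hy
            refine Or.inr ⟨x, ⟨hx, hxy.symm⟩, Sym2.eq_swap⟩
          · exact Or.inl ⟨hxy, fun w hw => by rcases hw with h | h <;> subst h <;> assumption⟩
      · rintro (⟨hxy, hmem⟩ | ⟨z, ⟨hz, hadj⟩, heq⟩)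
        · exact ⟨hxy, fun w hw => Or.inr (hmem w hw)⟩
        · rw [Sym2.eq_iff] at heq
          rcases heq with ⟨rfl, rfl⟩ | ⟨rfl, rfl⟩
          · exact ⟨hadj, fun w hw => by
              rcases hw with h | h <;> subst h
              · exact Or.inl rfl
              · exact Or.inr hz⟩
          · exact ⟨hadj.symm, fun w hw => by
              rcases hw with h | h <;> subst h
              · exact Or.inr hz
              · exact Or.inl rfl⟩
  rw [hset, card_union_of_disjoint, card_image_of_injOn]
  · intro y hy y' hy' hEq
    exact Sym2.congr_right.mp hEq
  · rw [disjoint_left]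
    rintro e he he'
    simp only [mem_filter] at he
    simp only [mem_image] at he'
    obtain ⟨z, hz, rfl⟩ := he'
    exact hv (he.2 v (Sym2.mem_mk_left v z))

open Finset in
lemma filter_erase_self {V : Type*} [DecidableEq V]
    (G : SimpleGraph V) [DecidableRel G.Adj] (v : V) (X : Finset V) :
    (X.erase v).filter (G.Adj v) = X.filter (G.Adj v) := by
  ext x
  simp only [mem_filter, mem_erase]
  constructor
  · rintro ⟨⟨_, hx⟩, hadj⟩; exact ⟨hx, hadj⟩
  · rintro ⟨hx, hadj⟩; exact ⟨⟨(G.ne_of_adj hadj).symm, hx⟩, hadj⟩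

open Finset in
lemma edgesIn_erase' {V : Type*} [Fintype V] [DecidableEq V]
    (G : SimpleGraph V) [DecidableRel G.Adj] (v : V) (X : Finset V) (hv : v ∈ X) :
    edgesIn G X = edgesIn G (X.erase v) + (X.filter (G.Adj v)).card := by
  conv_lhs => rw [← Finset.insert_erase hv]
  rw [edgesIn_insert' G v _ (Finset.notMem_erase v X), filter_erase_self]

/-- Deficient vertices on opposite sides are adjacent (Claim 7). -/
theorem deficient_vertices_adjacent {V : Type*} [Fintype V] [DecidableEq V]
    (G : SimpleGraph V) [DecidableRel G.Adj] (a b h : V → ℕ)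
    (hh : ∀ u, h u ≤ 1)
    (hdeg : ∀ u : V, G.degree u = a u + b u + h u)
    (ha : ∀ u, 1 ≤ a u) (hb : ∀ u, 1 ≤ b u)
    (hnf : ¬ FeasiblePair G a b)
    (X1 X2 : Finset V) (hP : DegenPartition G a b h X1 X2)
    (hmaxw : ∀ Y1 Y2 : Finset V, DegenPartition G a b h Y1 Y2 →
      wt G a b Y1 Y2 ≤ wt G a b X1 X2)
    (hminc : ∀ Y1 Y2 : Finset V, DegenPartition G a b h Y1 Y2 →
      wt G a b Y1 Y2 = wt G a b X1 X2 → X1.card ≤ Y1.card)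
    (u1 : V) (hu1 : u1 ∈ X1) (hd1 : (X1.filter (G.Adj u1)).card ≤ a u1)
    (u2 : V) (hu2 : u2 ∈ X2) (hd2 : (X2.filter (G.Adj u2)).card + 1 ≤ b u2 + h u2) :
    G.Adj u1 u2 := by
  classical
  by_contra hadj
  obtain ⟨hX1ne, hX2ne, hdisj, huniv, hm1, hm2⟩ := hP
  have hu2X1 : u2 ∉ X1 := fun hmem => (Finset.disjoint_left.mp hdisj hmem) hu2
  have hu1X2 : u1 ∉ X2 := fun hmem => (Finset.disjoint_left.mp hdisj hu1) hmem
  -- degree split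
  have hsplit : ∀ u : V, (X1.filter (G.Adj u)).card + (X2.filter (G.Adj u)).card
      = a u + b u + h u := by
    intro u
    have hd := hdeg u
    rw [SimpleGraph.degree, SimpleGraph.neighborFinset_eq_filter, ← huniv,
      Finset.filter_union,
      Finset.card_union_of_disjoint (Finset.disjoint_filter_filter hdisj)] at hd
    exact hd
  rcases Finset.eq_empty_or_nonempty (X2.erase u2) with hX2e | hZ2ne
  · -- X2 = {u2}
    have hX2eq : X2 = {u2} := by
      rcases (Finset.erase_eq_empty_iff X2 u2).mp hX2e with h | h
      · exact absurd (h ▸ hu2) (Finset.notMem_empty u2)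
      · exact h
    have he2 : (X2.filter (G.Adj u1)).card = 0 := by
      rw [hX2eq]
      simp [Finset.filter_singleton, hadj]
    have := hsplit u1
    have := hb u1
    omega
  · -- main case : move u2 into X1
    set Z1 : Finset V := insert u2 X1 with hZ1def
    set Z2 : Finset V := X2.erase u2 with hZ2def
    have hZuniv : Z1 ∪ Z2 = Finset.univ := by
      ext x
      simp only [hZ1def, hZ2def, Finset.mem_union, Finset.mem_insert, Finset.mem_erase,
        Finset.mem_univ, iff_true]
      have hx : x ∈ X1 ∪ X2 := huniv ▸ Finset.mem_univ x
      rw [Finset.mem_union] at hx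
      by_cases hxu : x = u2
      · exact Or.inl (Or.inl hxu)
      · tauto
    have hZdisj : Disjoint Z1 Z2 := by
      rw [Finset.disjoint_left]
      intro x hx hx2
      rw [hZ2def, Finset.mem_erase] at hx2
      rw [hZ1def, Finset.mem_insert] at hx
      rcases hx with rfl | hx
      · exact hx2.1 rfl
      · exact (Finset.disjoint_left.mp hdisj hx) hx2.2
    have hZm2 : ∀ X' ⊆ Z2, X'.Nonempty → ∃ x ∈ X', (X'.filter (G.Adj x)).card + 1 ≤ b x + h x :=
      fun X' hX' hX'ne => hm2 X' (hX'.trans (Finset.erase_subset u2 X2)) hX'ne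
    -- weight strictly increases
    have hE1 : edgesIn G Z1 = edgesIn G X1 + (X1.filter (G.Adj u2)).card :=
      edgesIn_insert' G u2 X1 hu2X1
    have hE2 : edgesIn G X2 = edgesIn G Z2 + (X2.filter (G.Adj u2)).card :=
      edgesIn_erase' G u2 X2 hu2
    have hS1 : ∑ u ∈ Z1, b u = ∑ u ∈ X1, b u + b u2 := by
      rw [hZ1def, Finset.sum_insert hu2X1]; ring
    have hS2 : ∑ v ∈ X2, a v = ∑ v ∈ Z2, a v + a u2 := by
      rw [hZ2def, ← Finset.sum_erase_add X2 a hu2]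
    have hkey : wt G a b Z1 Z2 + ((X2.filter (G.Adj u2)).card + a u2)
        = wt G a b X1 X2 + ((X1.filter (G.Adj u2)).card + b u2) := by
      unfold wt
      rw [hE1, hE2, hS1, hS2]; ring
    have hgt : wt G a b X1 X2 < wt G a b Z1 Z2 := by
      have := hsplit u2
      have := hh u2
      omega
    -- Z1 is not 1-meager
    have hZnm1 : ¬ (∀ X' ⊆ Z1, X'.Nonempty → ∃ x ∈ X', (X'.filter (G.Adj x)).card ≤ a x) := by
      intro hm
      have hdeg' : DegenPartition G a b h Z1 Z2 :=
        ⟨⟨u2, Finset.mem_insert_self u2 X1⟩, hZ2ne, hZdisj, hZuniv, hm, hZm2⟩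
      have := hmaxw Z1 Z2 hdeg'
      omega
    push_neg at hZnm1
    obtain ⟨A, hAZ, hAne, hA⟩ := hZnm1
    -- u1 ∉ A
    have hu1A : u1 ∉ A := by
      intro hmem
      have hsub : A.filter (G.Adj u1) ⊆ X1.filter (G.Adj u1) := by
        intro x hx
        rw [Finset.mem_filter] at hx ⊢
        have hxZ := hAZ hx.1
        rw [hZ1def, Finset.mem_insert] at hxZ
        rcases hxZ with rfl | hxX1
        · exact absurd hx.2 hadj
        · exact ⟨hxX1, hx.2⟩
      have := hA u1 hmem
      have := Finset.card_le_card hsub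
      omega
    -- u2 ∈ A
    have hu2A : u2 ∈ A := by
      by_contra hnmem
      have hAX1 : A ⊆ X1 := fun x hx =>
        (Finset.mem_insert.mp (hAZ hx)).resolve_left (by rintro rfl; exact hnmem hx)
      obtain ⟨x, hx, hle⟩ := hm1 A hAX1 hAne
      have := hA x hx
      omega
    set A0 : Finset V := A.erase u2 with hA0def
    have hA0sub : ∀ x ∈ A0, x ∈ X1 ∧ x ≠ u1 := by
      intro x hx
      rw [hA0def, Finset.mem_erase] at hx
      have hxZ := hAZ hx.2
      rw [hZ1def, Finset.mem_insert] at hxZ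
      exact ⟨hxZ.resolve_left hx.1, fun hEq => hu1A (hEq ▸ hx.2)⟩
    have hA0ne : A0.Nonempty := by
      have hcard := hA u2 hu2A
      have hpos : 0 < (A.filter (G.Adj u2)).card := lt_of_le_of_lt (Nat.zero_le _) hcard
      obtain ⟨y, hy⟩ := Finset.card_pos.mp hpos
      rw [Finset.mem_filter] at hy
      exact ⟨y, Finset.mem_erase.mpr ⟨(G.ne_of_adj hy.2).symm, hy.1⟩⟩
    have hA0deg : ∀ x ∈ A0, a x ≤ (A0.filter (G.Adj x)).card := by
      intro x hx
      have hxA : x ∈ A := Finset.mem_of_mem_erase hx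
      have hsub : A.filter (G.Adj x) ⊆ insert u2 (A0.filter (G.Adj x)) := by
        intro y hy
        rw [Finset.mem_filter] at hy
        rw [Finset.mem_insert]
        by_cases hyu : y = u2
        · exact Or.inl hyu
        · exact Or.inr (Finset.mem_filter.mpr ⟨Finset.mem_erase.mpr ⟨hyu, hy.1⟩, hy.2⟩)
      have h1 := hA x hxA
      have h2 := Finset.card_le_card hsub
      have h3 := Finset.card_insert_le u2 (A0.filter (G.Adj x))
      omega
    -- the partition (X1 \ {u1}, X2 ∪ {u1})
    set W1 : Finset V := X1.erase u1 with hW1def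
    set W2 : Finset V := insert u1 X2 with hW2def
    have hA0W1 : A0 ⊆ W1 := fun x hx =>
      Finset.mem_erase.mpr ⟨(hA0sub x hx).2, (hA0sub x hx).1⟩
    have hWuniv : W1 ∪ W2 = Finset.univ := by
      ext x
      simp only [hW1def, hW2def, Finset.mem_union, Finset.mem_insert, Finset.mem_erase,
        Finset.mem_univ, iff_true]
      have hx : x ∈ X1 ∪ X2 := huniv ▸ Finset.mem_univ x
      rw [Finset.mem_union] at hx
      by_cases hxu : x = u1
      · exact Or.inr (Or.inl hxu)
      · tauto
    have hWdisj : Disjoint W1 W2 := by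
      rw [Finset.disjoint_left]
      intro x hx hx2
      rw [hW1def, Finset.mem_erase] at hx
      rw [hW2def, Finset.mem_insert] at hx2
      rcases hx2 with rfl | hx2
      · exact hx.1 rfl
      · exact (Finset.disjoint_left.mp hdisj hx.2) hx2
    have hWm1 : ∀ X' ⊆ W1, X'.Nonempty → ∃ x ∈ X', (X'.filter (G.Adj x)).card ≤ a x :=
      fun X' hX' hX'ne => hm1 X' (hX'.trans (Finset.erase_subset u1 X1)) hX'ne
    have hWm2 : ∀ X' ⊆ W2, X'.Nonempty → ∃ x ∈ X', (X'.filter (G.Adj x)).card + 1 ≤ b x + h x := by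
      intro B hBW2 hBne
      by_contra hc
      push_neg at hc
      have hBdeg : ∀ x ∈ B, b x ≤ (B.filter (G.Adj x)).card := by
        intro x hx
        have := hc x hx
        omega
      have hABdisj : Disjoint A0 B := by
        rw [Finset.disjoint_left]
        intro x hx hxB
        have hxW2 := hBW2 hxB
        rw [hW2def, Finset.mem_insert] at hxW2
        rcases hxW2 with rfl | hxX2
        · exact (hA0sub x hx).2 rfl
        · exact (Finset.disjoint_left.mp hdisj (hA0sub x hx).1) hxX2
      exact hnf ⟨A0, B, hA0ne, hBne, hABdisj, hA0deg, hBdeg⟩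
    have hWdeg : DegenPartition G a b h W1 W2 :=
      ⟨hA0ne.mono hA0W1, ⟨u1, Finset.mem_insert_self u1 X2⟩, hWdisj, hWuniv, hWm1, hWm2⟩
    -- weight does not decrease when moving u1
    have hE1' : edgesIn G X1 = edgesIn G W1 + (X1.filter (G.Adj u1)).card :=
      edgesIn_erase' G u1 X1 hu1
    have hE2' : edgesIn G W2 = edgesIn G X2 + (X2.filter (G.Adj u1)).card :=
      edgesIn_insert' G u1 X2 hu1X2
    have hS1' : ∑ u ∈ X1, b u = ∑ u ∈ W1, b u + b u1 := by
      rw [hW1def, ← Finset.sum_erase_add X1 b hu1]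
    have hS2' : ∑ v ∈ W2, a v = ∑ v ∈ X2, a v + a u1 := by
      rw [hW2def, Finset.sum_insert hu1X2]; ring
    have hkey' : wt G a b W1 W2 + ((X1.filter (G.Adj u1)).card + b u1)
        = wt G a b X1 X2 + ((X2.filter (G.Adj u1)).card + a u1) := by
      unfold wt
      rw [hE1', hE2', hS1', hS2']; ring
    have hsp1 := hsplit u1
    have hge : wt G a b X1 X2 ≤ wt G a b W1 W2 := by omega
    have hle := hmaxw W1 W2 hWdeg
    have heq : wt G a b W1 W2 = wt G a b X1 X2 := le_antisymm hle hge
    have hmin := hminc W1 W2 hWdeg heq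
    have hcard : W1.card = X1.card - 1 := Finset.card_erase_of_mem hu1
    have hpos : 0 < X1.card := Finset.card_pos.mpr ⟨u1, hu1⟩
    omega
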